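/- Let (α^(m), W^(m)) be a sequence in WF(n) and (α, W) ∈ WF(n); let I = τ(α), J^(m) = τ(α^(m)), and choose U ∈ O(n) with π_I(U) = W and U^(m) ∈ O(n) with π_{J^(m)}(U^(m)) = W^(m), with columns u_1,…,u_n and u_1^(m),…,u_n^(m) respectively. Then (α^(m), W^(m)) → (α, W) in the quotient topology of WF(n) if and only if α^(m) → α in ℝⁿ and, for every k ∈ {1,…,n} with α_k > 0, span(u_1^(m),…,u_k^(m)) → span(u_1,…,u_k) in G_{k,n}; equivalently, α^(m) → α and p_{J^(m)→I}(W^(m)) → W in F_I (the projection p_{J^(m)→I} being defined for m large enough, since then J^(m) ≼ I). -/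
import Mathlib


/-!
Statement 1 (Proposition `prop:weightedFlagsCV`): topology of weighted flags.

The space of weighted flags `WF(n)` is the quotient of `Δ(n) × O(n)` by the relation
`(α, U) ∼ (β, V)` iff `α = β` and, for every index `k` with `α_k > 0`, the spans of the
first `k` columns of `U` and `V` agree (equivalently `π_{τ(α)}(U) = π_{τ(α)}(V)`);
spans of orthonormal families are identified with their orthogonal projectors.
The flag space `F_{τ(α)} = O(n)/O(τ(α))` is encoded via the block-diagonal subgroup of
`O(n)` determined by the cuts at the indices `k` with `α_k > 0`; the projection
`p_{J^(m) → I}(W^(m))` is expressed through the common lifts `U^(m)` to `O(n)`.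
-/

open Matrix Filter Topology

/-- Same-block relation induced by a set of "cuts". -/
def sameBlock {n : ℕ} (c : Fin n → Prop) (i j : Fin n) : Prop :=
  ∀ k : Fin n, c k → ((i : ℕ) ≤ k ↔ (j : ℕ) ≤ k)

lemma sameBlock.refl {n : ℕ} (c : Fin n → Prop) (i : Fin n) : sameBlock c i i :=
  fun _ _ => Iff.rfl

lemma sameBlock.symm {n : ℕ} {c : Fin n → Prop} {i j : Fin n} (h : sameBlock c i j) :
    sameBlock c j i := fun k hk => (h k hk).symm

lemma sameBlock.trans {n : ℕ} {c : Fin n → Prop} {i j l : Fin n} (h : sameBlock c i j)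
    (h' : sameBlock c j l) : sameBlock c i l := fun k hk => (h k hk).trans (h' k hk)

/-- The real orthogonal group `O(n)`. -/
abbrev OG (n : ℕ) := Matrix.orthogonalGroup (Fin n) ℝ

/-- The block-diagonal subgroup `O(I)` of `O(n)` determined by a cut predicate `c`. -/
def blockSubgroup {n : ℕ} (c : Fin n → Prop) : Subgroup (OG n) where
  carrier := {R | ∀ i j : Fin n, ¬ sameBlock c i j → (R : Matrix (Fin n) (Fin n) ℝ) i j = 0}
  one_mem' := by
    intro i j h
    have hne : i ≠ j := by rintro rfl; exact h (sameBlock.refl c i)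
    simp [Matrix.one_apply, hne]
  mul_mem' := by
    intro A B hA hB i j h
    have : (↑(A * B) : Matrix (Fin n) (Fin n) ℝ) = (A : Matrix (Fin n) (Fin n) ℝ) * B := rfl
    rw [this, Matrix.mul_apply]
    refine Finset.sum_eq_zero fun l _ => ?_
    by_cases hil : sameBlock c i l
    · have : ¬ sameBlock c l j := fun hlj => h (hil.trans hlj)
      rw [hB l j this, mul_zero]
    · rw [hA i l hil, zero_mul]
  inv_mem' := by
    intro A hA i j h
    have : (↑(A⁻¹) : Matrix (Fin n) (Fin n) ℝ) = star (A : Matrix (Fin n) (Fin n) ℝ) :=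
      Matrix.UnitaryGroup.inv_val A
    rw [this, Matrix.star_apply, star_trivial]
    exact hA j i fun hji => h hji.symm

/-- The unit simplex `Δ(n)`. -/
abbrev Del (n : ℕ) := {v : Fin n → ℝ // (∀ i, 0 ≤ v i) ∧ ∑ i, v i = 1}

/-- The orthogonal projector onto the span of the columns of `U` indexed by `s`. -/
def colProj {n : ℕ} (U : OG n) (s : Finset (Fin n)) : Matrix (Fin n) (Fin n) ℝ :=
  Matrix.of fun a b =>
    ∑ i ∈ s, (U : Matrix (Fin n) (Fin n) ℝ) a i * (U : Matrix (Fin n) (Fin n) ℝ) b i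

/-- The defining equivalence of weighted flags on `Δ(n) × O(n)`:
`(α, U) ∼ (β, V)` iff `α = β` and for every `k` with `α_k > 0` the spans of the first
`k` columns agree. -/
def wfSetoid (n : ℕ) : Setoid (Del n × OG n) where
  r a b := a.1 = b.1 ∧
    ∀ k : Fin n, 0 < (a.1 : Fin n → ℝ) k →
      colProj a.2 (Finset.Iic k) = colProj b.2 (Finset.Iic k)
  iseqv := by
    constructor
    · exact fun a => ⟨rfl, fun _ _ => rfl⟩
    · rintro a b ⟨h1, h2⟩
      refine ⟨h1.symm, fun k hk => ?_⟩
      rw [← h1] at hk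
      exact (h2 k hk).symm
    · rintro a b c ⟨h1, h2⟩ ⟨h1', h2'⟩
      refine ⟨h1.trans h1', fun k hk => ?_⟩
      refine (h2 k hk).trans (h2' k ?_)
      rwa [← h1]

/-- The space `WF(n)` of weighted flags, with the quotient topology. -/
def WF (n : ℕ) := Quotient (wfSetoid n)

instance (n : ℕ) : TopologicalSpace (WF n) :=
  inferInstanceAs (TopologicalSpace (Quotient (wfSetoid n)))

/-- Class of a pair `(α, U)` in `WF(n)`. -/
def mkWF {n : ℕ} (p : Del n × OG n) : WF n := Quotient.mk (wfSetoid n) p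

/-- The flag space `F_{τ(α)}` of flags of the type of `α ∈ Δ(n)`, realized as the
quotient of `O(n)` by the block-diagonal subgroup with cuts at the indices `k` with
`α_k > 0`. -/
abbrev flagOfType {n : ℕ} (α : Del n) :=
  OG n ⧸ blockSubgroup (n := n) (fun k => 0 < (α : Fin n → ℝ) k)


variable {n : ℕ}

lemma og_col (U : OG n) (i j : Fin n) :
    ∑ a, (U : Matrix (Fin n) (Fin n) ℝ) a i * (U : Matrix (Fin n) (Fin n) ℝ) a j
      = if i = j then 1 else 0 := by
  have h : (star (U : Matrix (Fin n) (Fin n) ℝ) * U) i j = (1 : Matrix (Fin n) (Fin n) ℝ) i j := by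
    rw [Matrix.UnitaryGroup.star_mul_self]
  simpa [Matrix.mul_apply, Matrix.star_apply, Matrix.one_apply] using h

lemma og_row (U : OG n) (a b : Fin n) :
    ∑ i, (U : Matrix (Fin n) (Fin n) ℝ) a i * (U : Matrix (Fin n) (Fin n) ℝ) b i
      = if a = b then 1 else 0 := by
  have h : ((U : Matrix (Fin n) (Fin n) ℝ) * star (U : Matrix (Fin n) (Fin n) ℝ)) a b
      = (1 : Matrix (Fin n) (Fin n) ℝ) a b := by
    rw [Matrix.mem_unitaryGroup_iff.mp U.2]
  simpa [Matrix.mul_apply, Matrix.star_apply, Matrix.one_apply] using h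

lemma colProj_symm (U : OG n) (s : Finset (Fin n)) (a b : Fin n) :
    colProj U s a b = colProj U s b a := by
  simp [colProj, mul_comm]

lemma colProj_mul (U : OG n) (s : Finset (Fin n)) (a j : Fin n) :
    ∑ b, colProj U s a b * (U : Matrix (Fin n) (Fin n) ℝ) b j
      = if j ∈ s then (U : Matrix (Fin n) (Fin n) ℝ) a j else 0 := by
  simp only [colProj, of_apply, Finset.sum_mul]
  rw [Finset.sum_comm]
  have : ∀ i ∈ s, ∑ b, (U : Matrix (Fin n) (Fin n) ℝ) a i * (U : Matrix (Fin n) (Fin n) ℝ) b i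
      * (U : Matrix (Fin n) (Fin n) ℝ) b j
      = (U : Matrix (Fin n) (Fin n) ℝ) a i * (if i = j then 1 else 0) := by
    intro i _
    rw [← og_col U i j, Finset.mul_sum]
    exact Finset.sum_congr rfl fun b _ => by ring
  rw [Finset.sum_congr rfl this]
  simp only [mul_ite, mul_one, mul_zero]
  rw [Finset.sum_ite_eq' s j]

lemma colProj_abs_le_one (U : OG n) (s : Finset (Fin n)) (a b : Fin n) :
    |colProj U s a b| ≤ 1 := by
  rw [← sq_le_one_iff_abs_le_one]
  have h2 := Finset.sum_mul_sq_le_sq_mul_sq s (fun i => (U : Matrix (Fin n) (Fin n) ℝ) a i)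
    (fun i => (U : Matrix (Fin n) (Fin n) ℝ) b i)
  have hsub : ∀ c : Fin n, (∑ i ∈ s, (U : Matrix (Fin n) (Fin n) ℝ) c i ^ 2) ≤ 1 := by
    intro c
    have h1 := og_row U c c
    simp only [if_true, eq_self_iff_true] at h1
    calc ∑ i ∈ s, (U : Matrix (Fin n) (Fin n) ℝ) c i ^ 2
        ≤ ∑ i, (U : Matrix (Fin n) (Fin n) ℝ) c i ^ 2 :=
          Finset.sum_le_sum_of_subset_of_nonneg (Finset.subset_univ s)
            (fun i _ _ => sq_nonneg _)
      _ = 1 := by rw [← h1]; exact Finset.sum_congr rfl fun i _ => sq ((U : Matrix (Fin n) (Fin n) ℝ) c i)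
  have hnn : (0:ℝ) ≤ ∑ i ∈ s, (U : Matrix (Fin n) (Fin n) ℝ) b i ^ 2 :=
    Finset.sum_nonneg fun i _ => sq_nonneg _
  calc (colProj U s a b) ^ 2
      ≤ (∑ i ∈ s, (U : Matrix (Fin n) (Fin n) ℝ) a i ^ 2)
        * (∑ i ∈ s, (U : Matrix (Fin n) (Fin n) ℝ) b i ^ 2) := h2
    _ ≤ 1 := mul_le_one₀ (hsub a) hnn (hsub b)

lemma continuous_colProj (s : Finset (Fin n)) :
    Continuous fun U : OG n => colProj U s := by
  apply continuous_pi; intro a; apply continuous_pi; intro b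
  apply continuous_finset_sum
  intro i _
  have hc : ∀ c d : Fin n, Continuous fun U : OG n => (U : Matrix (Fin n) (Fin n) ℝ) c d :=
    fun c d => (continuous_apply d).comp ((continuous_apply c).comp continuous_subtype_val)
  exact (hc a i).mul (hc b i)


lemma not_sameBlock_left {c : Fin n → Prop} {k l i : Fin n} (hk : c k)
    (hl : l ∈ Finset.Iic k) (hi : i ∉ Finset.Iic k) : ¬ sameBlock c l i := by
  intro hsb
  exact hi (Finset.mem_Iic.2 (Fin.le_def.2 ((hsb k hk).1 (Fin.le_def.1 (Finset.mem_Iic.1 hl)))))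

/-- Right-invariance of the projectors under the block subgroup. -/
lemma colProj_mul_mem {c : Fin n → Prop} {R : OG n} (hR : R ∈ blockSubgroup c)
    (U : OG n) {k : Fin n} (hk : c k) :
    colProj (U * R) (Finset.Iic k) = colProj U (Finset.Iic k) := by
  have hRz : ∀ {l i : Fin n}, l ∈ Finset.Iic k → i ∉ Finset.Iic k →
      (R : Matrix (Fin n) (Fin n) ℝ) l i = 0 := fun hl hi => hR _ _ (not_sameBlock_left hk hl hi)
  have hRz' : ∀ {l i : Fin n}, l ∉ Finset.Iic k → i ∈ Finset.Iic k →
      (R : Matrix (Fin n) (Fin n) ℝ) l i = 0 := fun hl hi =>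
    hR _ _ (fun hsb => not_sameBlock_left hk hi hl hsb.symm)
  have key : ∀ l l' : Fin n, ∑ i ∈ Finset.Iic k,
      (R : Matrix (Fin n) (Fin n) ℝ) l i * (R : Matrix (Fin n) (Fin n) ℝ) l' i
      = if l = l' ∧ l ∈ Finset.Iic k then 1 else 0 := by
    intro l l'
    by_cases hl : l ∈ Finset.Iic k
    · by_cases hl' : l' ∈ Finset.Iic k
      · have hfull : ∑ i ∈ Finset.Iic k,
            (R : Matrix (Fin n) (Fin n) ℝ) l i * (R : Matrix (Fin n) (Fin n) ℝ) l' i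
            = ∑ i, (R : Matrix (Fin n) (Fin n) ℝ) l i * (R : Matrix (Fin n) (Fin n) ℝ) l' i := by
          apply Finset.sum_subset (Finset.subset_univ _)
          intro i _ hi
          rw [hRz hl hi, zero_mul]
        rw [hfull, og_row R l l']
        by_cases h : l = l' <;> simp [h, hl, Finset.mem_Iic.1 hl']
      · have : ∀ i ∈ Finset.Iic k,
            (R : Matrix (Fin n) (Fin n) ℝ) l i * (R : Matrix (Fin n) (Fin n) ℝ) l' i = 0 :=
          fun i hi => by rw [hRz' hl' hi, mul_zero]
        rw [Finset.sum_eq_zero this]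
        have : l ≠ l' := fun h => hl' (h ▸ hl)
        simp [this]
    · have : ∀ i ∈ Finset.Iic k,
          (R : Matrix (Fin n) (Fin n) ℝ) l i * (R : Matrix (Fin n) (Fin n) ℝ) l' i = 0 :=
        fun i hi => by rw [hRz' hl hi, zero_mul]
      rw [Finset.sum_eq_zero this]
      simp [hl]
  ext a b
  show ∑ i ∈ Finset.Iic k, _ = ∑ i ∈ Finset.Iic k, _
  have hUR : ((U * R : OG n) : Matrix (Fin n) (Fin n) ℝ)
      = (U : Matrix (Fin n) (Fin n) ℝ) * (R : Matrix (Fin n) (Fin n) ℝ) := rfl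
  calc ∑ i ∈ Finset.Iic k, ((U * R : OG n) : Matrix (Fin n) (Fin n) ℝ) a i
        * ((U * R : OG n) : Matrix (Fin n) (Fin n) ℝ) b i
      = ∑ i ∈ Finset.Iic k, ∑ l, ∑ l',
          ((U : Matrix (Fin n) (Fin n) ℝ) a l * (U : Matrix (Fin n) (Fin n) ℝ) b l')
          * ((R : Matrix (Fin n) (Fin n) ℝ) l i * (R : Matrix (Fin n) (Fin n) ℝ) l' i) := by
        refine Finset.sum_congr rfl fun i _ => ?_
        rw [hUR, Matrix.mul_apply, Matrix.mul_apply, Finset.sum_mul_sum]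
        exact Finset.sum_congr rfl fun l _ => Finset.sum_congr rfl fun l' _ => by ring
    _ = ∑ l, ∑ l', ((U : Matrix (Fin n) (Fin n) ℝ) a l * (U : Matrix (Fin n) (Fin n) ℝ) b l')
          * ∑ i ∈ Finset.Iic k,
            (R : Matrix (Fin n) (Fin n) ℝ) l i * (R : Matrix (Fin n) (Fin n) ℝ) l' i := by
        rw [Finset.sum_comm]
        refine Finset.sum_congr rfl fun l _ => ?_
        rw [Finset.sum_comm]
        exact Finset.sum_congr rfl fun l' _ => (Finset.mul_sum _ _ _).symm
    _ = ∑ i ∈ Finset.Iic k, (U : Matrix (Fin n) (Fin n) ℝ) a i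
          * (U : Matrix (Fin n) (Fin n) ℝ) b i := by
        simp_rw [key]
        simp only [mul_ite, mul_one, mul_zero, ite_and]
        rw [Finset.sum_congr rfl fun l (_ : l ∈ Finset.univ) => Finset.sum_ite_eq Finset.univ l
          (fun l' => if l ∈ Finset.Iic k then (U : Matrix (Fin n) (Fin n) ℝ) a l
            * (U : Matrix (Fin n) (Fin n) ℝ) b l' else 0)]
        simp only [Finset.mem_univ, if_true]
        rw [← Finset.sum_filter]
        congr 1
        ext l
        simp

/-- If the projectors on the first `k` columns agree, a column of `U` in the block and
a column of `V` outside it are orthogonal. -/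
lemma sum_col_inner_eq_zero {U V : OG n} {k i j : Fin n}
    (hP : colProj U (Finset.Iic k) = colProj V (Finset.Iic k))
    (hi : i ∈ Finset.Iic k) (hj : j ∉ Finset.Iic k) :
    ∑ a, (U : Matrix (Fin n) (Fin n) ℝ) a i * (V : Matrix (Fin n) (Fin n) ℝ) a j = 0 := by
  have hU : ∀ a, (U : Matrix (Fin n) (Fin n) ℝ) a i
      = ∑ b, colProj U (Finset.Iic k) a b * (U : Matrix (Fin n) (Fin n) ℝ) b i := by
    intro a; rw [colProj_mul U (Finset.Iic k) a i, if_pos hi]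
  calc ∑ a, (U : Matrix (Fin n) (Fin n) ℝ) a i * (V : Matrix (Fin n) (Fin n) ℝ) a j
      = ∑ a, (∑ b, colProj U (Finset.Iic k) a b * (U : Matrix (Fin n) (Fin n) ℝ) b i)
        * (V : Matrix (Fin n) (Fin n) ℝ) a j := by
        exact Finset.sum_congr rfl fun a _ => by rw [← hU a]
    _ = ∑ b, (U : Matrix (Fin n) (Fin n) ℝ) b i
        * ∑ a, colProj V (Finset.Iic k) b a * (V : Matrix (Fin n) (Fin n) ℝ) a j := by
        simp_rw [Finset.sum_mul]
        rw [Finset.sum_comm]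
        refine Finset.sum_congr rfl fun b _ => ?_
        rw [Finset.mul_sum]
        refine Finset.sum_congr rfl fun a _ => ?_
        rw [← hP, colProj_symm U (Finset.Iic k) b a]
        ring
    _ = 0 := by
        refine Finset.sum_eq_zero fun b _ => ?_
        rw [colProj_mul V (Finset.Iic k) b j, if_neg hj, mul_zero]

/-- Equality of the projectors at the cuts puts `U⁻¹ * V` in the block subgroup. -/
lemma mem_blockSubgroup_of_colProj_eq {c : Fin n → Prop} {U V : OG n}
    (h : ∀ k, c k → colProj U (Finset.Iic k) = colProj V (Finset.Iic k)) :
    U⁻¹ * V ∈ blockSubgroup c := by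
  intro i j hij
  have hval : (↑(U⁻¹ * V) : Matrix (Fin n) (Fin n) ℝ) i j
      = ∑ a, (U : Matrix (Fin n) (Fin n) ℝ) a i * (V : Matrix (Fin n) (Fin n) ℝ) a j := by
    have : (↑(U⁻¹ * V) : Matrix (Fin n) (Fin n) ℝ)
        = star (U : Matrix (Fin n) (Fin n) ℝ) * (V : Matrix (Fin n) (Fin n) ℝ) := by
      rw [show (↑(U⁻¹ * V) : Matrix (Fin n) (Fin n) ℝ)
          = (↑(U⁻¹) : Matrix (Fin n) (Fin n) ℝ) * (V : Matrix (Fin n) (Fin n) ℝ) from rfl,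
        Matrix.UnitaryGroup.inv_val]
    rw [this]
    simp [Matrix.mul_apply, Matrix.star_apply]
  rw [hval]
  simp only [sameBlock, not_forall] at hij
  obtain ⟨k, hk, hiff⟩ := hij
  by_cases hik : (i : ℕ) ≤ k
  · have hjk : ¬ (j : ℕ) ≤ k := fun hj => hiff ⟨fun _ => hj, fun _ => hik⟩
    exact sum_col_inner_eq_zero (h k hk) (Finset.mem_Iic.2 (Fin.le_def.2 hik))
      (fun hj => hjk (Fin.le_def.1 (Finset.mem_Iic.1 hj)))
  · have hjk : (j : ℕ) ≤ k := by
      by_contra hj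
      exact hiff ⟨fun hi => absurd hi hik, fun hj' => absurd hj' hj⟩
    have := sum_col_inner_eq_zero (h k hk).symm (Finset.mem_Iic.2 (Fin.le_def.2 hjk))
      (fun hi => hik (Fin.le_def.1 (Finset.mem_Iic.1 hi)))
    rw [← this]
    exact Finset.sum_congr rfl fun a _ => mul_comm _ _

instance OG.compactSpace : CompactSpace (OG n) := by
  have hclosed : IsClosed ((Matrix.unitaryGroup (Fin n) ℝ : Set (Matrix (Fin n) (Fin n) ℝ))) := by
    have : (Matrix.unitaryGroup (Fin n) ℝ : Set (Matrix (Fin n) (Fin n) ℝ))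
        = (fun A : Matrix (Fin n) (Fin n) ℝ => star A * A) ⁻¹' {1} := by
      ext A
      rw [SetLike.mem_coe, Matrix.mem_unitaryGroup_iff']
      exact Iff.rfl
    rw [this]
    exact isClosed_singleton.preimage ((continuous_id.matrix_transpose.matrix_mul continuous_id))
  have hsub : (Matrix.unitaryGroup (Fin n) ℝ : Set (Matrix (Fin n) (Fin n) ℝ))
      ⊆ Set.univ.pi (fun _ : Fin n => Set.univ.pi fun _ : Fin n => Set.Icc (-1:ℝ) 1) := by
    intro A hA
    refine Set.mem_pi.mpr fun a _ => Set.mem_pi.mpr fun b _ => Set.mem_Icc.mpr ?_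
    have h := Matrix.mem_unitaryGroup_iff.mp hA
    have hrow : ∑ i, A a i * A a i = 1 := by
      have h1 : (A * star A) a a = (1 : Matrix (Fin n) (Fin n) ℝ) a a := by rw [h]
      simpa [Matrix.mul_apply, Matrix.star_apply, Matrix.one_apply] using h1
    have hb : A a b ^ 2 ≤ 1 := by
      calc A a b ^ 2 ≤ ∑ i, A a i ^ 2 :=
            Finset.single_le_sum (fun i _ => sq_nonneg (A a i)) (Finset.mem_univ b)
        _ = 1 := by rw [← hrow]; exact Finset.sum_congr rfl fun i _ => sq (A a i)
    have := abs_le.mp ((sq_le_one_iff_abs_le_one (A a b)).mp hb)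
    exact this
  exact isCompact_iff_compactSpace.mp (IsCompact.of_isClosed_subset
    (isCompact_univ_pi fun _ => isCompact_univ_pi fun _ => isCompact_Icc) hclosed hsub)

instance Del.compactSpace : CompactSpace (Del n) := by
  have hclosed : IsClosed {v : Fin n → ℝ | (∀ i, 0 ≤ v i) ∧ ∑ i, v i = 1} := by
    have h1 : IsClosed {v : Fin n → ℝ | ∀ i, 0 ≤ v i} := by
      have he : {v : Fin n → ℝ | ∀ i, 0 ≤ v i} = ⋂ i, {v : Fin n → ℝ | 0 ≤ v i} := by
        ext v; simp
      rw [he]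
      exact isClosed_iInter fun i => isClosed_le continuous_const (continuous_apply i)
    have h2 : IsClosed {v : Fin n → ℝ | ∑ i, v i = 1} :=
      isClosed_eq (continuous_finset_sum _ fun i _ => continuous_apply i) continuous_const
    have he : {v : Fin n → ℝ | (∀ i, 0 ≤ v i) ∧ ∑ i, v i = 1}
        = {v : Fin n → ℝ | ∀ i, 0 ≤ v i} ∩ {v : Fin n → ℝ | ∑ i, v i = 1} := rfl
    rw [he]
    exact h1.inter h2
  have hsub : {v : Fin n → ℝ | (∀ i, 0 ≤ v i) ∧ ∑ i, v i = 1}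
      ⊆ Set.univ.pi fun _ : Fin n => Set.Icc (0:ℝ) 1 := by
    rintro v ⟨hnn, hsum⟩
    simp only [Set.mem_pi, Set.mem_univ, forall_true_left, Set.mem_Icc]
    intro i
    refine ⟨hnn i, ?_⟩
    calc v i ≤ ∑ j, v j := Finset.single_le_sum (fun j _ => hnn j) (Finset.mem_univ i)
      _ = 1 := hsum
  exact isCompact_iff_compactSpace.mp
    (IsCompact.of_isClosed_subset (isCompact_univ_pi fun _ => isCompact_Icc) hclosed hsub)

instance WF.compactSpace : CompactSpace (WF n) :=
  inferInstanceAs (CompactSpace (Quotient (wfSetoid n)))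
example {c : Fin n → Prop} : CompactSpace (OG n ⧸ blockSubgroup c) := inferInstance

/-- The embedding of `WF(n)` into `ℝⁿ × (matrices)ⁿ`. -/
def psiMap {n : ℕ} : Del n × OG n → (Fin n → ℝ) × (Fin n → Matrix (Fin n) (Fin n) ℝ) :=
  fun p => ((p.1 : Fin n → ℝ), fun k => (p.1 : Fin n → ℝ) k • colProj p.2 (Finset.Iic k))

lemma psiMap_resp {n : ℕ} : ∀ a b : Del n × OG n, (wfSetoid n).r a b → psiMap a = psiMap b := by
  rintro a b ⟨h1, h2⟩
  have hv : (a.1 : Fin n → ℝ) = (b.1 : Fin n → ℝ) := by rw [h1]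
  refine Prod.ext hv ?_
  funext k
  show (a.1 : Fin n → ℝ) k • colProj a.2 (Finset.Iic k)
      = (b.1 : Fin n → ℝ) k • colProj b.2 (Finset.Iic k)
  by_cases hk : 0 < (a.1 : Fin n → ℝ) k
  · rw [hv, h2 k hk]
  · have h0 : (a.1 : Fin n → ℝ) k = 0 := le_antisymm (not_lt.mp hk) (a.1.2.1 k)
    have h0' : (b.1 : Fin n → ℝ) k = 0 := hv ▸ h0
    rw [h0, h0', zero_smul, zero_smul]

lemma psiMap_cont {n : ℕ} : Continuous (psiMap (n := n)) := by
  apply Continuous.prodMk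
  · exact continuous_subtype_val.comp continuous_fst
  · apply continuous_pi
    intro k
    exact ((continuous_apply k).comp (continuous_subtype_val.comp continuous_fst)).smul
      ((continuous_colProj (Finset.Iic k)).comp continuous_snd)

lemma psiMap_inj {n : ℕ} : ∀ a b : Del n × OG n, psiMap a = psiMap b → (wfSetoid n).r a b := by
  intro a b h
  have h1 : (a.1 : Fin n → ℝ) = (b.1 : Fin n → ℝ) := congrArg Prod.fst h
  have h2 := congrArg Prod.snd h
  refine ⟨Subtype.ext h1, fun k hk => ?_⟩
  have := congrFun h2 k
  simp only [psiMap] at this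
  rw [← h1] at this
  exact smul_right_injective (Matrix (Fin n) (Fin n) ℝ) (ne_of_gt hk) this

/-- The induced map on the quotient. -/
def psiBar {n : ℕ} : WF n → (Fin n → ℝ) × (Fin n → Matrix (Fin n) (Fin n) ℝ) :=
  Quotient.lift psiMap psiMap_resp

lemma psiBar_isClosedEmbedding {n : ℕ} : Topology.IsClosedEmbedding (psiBar (n := n)) := by
  apply Continuous.isClosedEmbedding
  · exact psiMap_cont.quotient_lift _
  · intro x y
    induction x using Quotient.ind
    induction y using Quotient.ind
    intro h
    exact Quotient.sound (psiMap_inj _ _ h)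

lemma tendsto_mkWF_iff {n : ℕ} (αU : ℕ → Del n × OG n) (x : Del n × OG n) :
    Tendsto (fun m => mkWF (αU m)) atTop (𝓝 (mkWF x)) ↔
      (Tendsto (fun m => ((αU m).1 : Fin n → ℝ)) atTop (𝓝 (x.1 : Fin n → ℝ)) ∧
        ∀ k : Fin n, Tendsto
          (fun m => ((αU m).1 : Fin n → ℝ) k • colProj (αU m).2 (Finset.Iic k)) atTop
          (𝓝 ((x.1 : Fin n → ℝ) k • colProj x.2 (Finset.Iic k)))) := by
  rw [psiBar_isClosedEmbedding.isInducing.tendsto_nhds_iff]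
  have hc : psiBar ∘ (fun m => mkWF (αU m)) = fun m => psiMap (αU m) := rfl
  have hx : psiBar (mkWF x) = psiMap x := rfl
  rw [hc, hx, Prod.tendsto_iff]
  constructor
  · rintro ⟨ha, hb⟩
    exact ⟨ha, fun k => (tendsto_pi_nhds.mp hb) k⟩
  · rintro ⟨ha, hb⟩
    exact ⟨ha, tendsto_pi_nhds.mpr hb⟩

lemma tendsto_smul_colProj_iff {n : ℕ} {αU : ℕ → Del n × OG n} {x : Del n × OG n}
    (hα : Tendsto (fun m => ((αU m).1 : Fin n → ℝ)) atTop (𝓝 (x.1 : Fin n → ℝ))) :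
    (∀ k : Fin n, Tendsto
        (fun m => ((αU m).1 : Fin n → ℝ) k • colProj (αU m).2 (Finset.Iic k)) atTop
        (𝓝 ((x.1 : Fin n → ℝ) k • colProj x.2 (Finset.Iic k)))) ↔
    (∀ k : Fin n, 0 < (x.1 : Fin n → ℝ) k →
        Tendsto (fun m => colProj (αU m).2 (Finset.Iic k)) atTop
          (𝓝 (colProj x.2 (Finset.Iic k)))) := by
  have hαk : ∀ k : Fin n, Tendsto (fun m => ((αU m).1 : Fin n → ℝ) k) atTop
      (𝓝 ((x.1 : Fin n → ℝ) k)) := fun k => (tendsto_pi_nhds.mp hα) k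
  constructor
  · intro h k hk
    have hev : ∀ᶠ m in atTop, (0:ℝ) < ((αU m).1 : Fin n → ℝ) k :=
      (hαk k).eventually (eventually_gt_nhds hk)
    have h2 : Tendsto (fun m => (((αU m).1 : Fin n → ℝ) k)⁻¹ •
        (((αU m).1 : Fin n → ℝ) k • colProj (αU m).2 (Finset.Iic k))) atTop
        (𝓝 (((x.1 : Fin n → ℝ) k)⁻¹ • ((x.1 : Fin n → ℝ) k • colProj x.2 (Finset.Iic k)))) :=
      ((hαk k).inv₀ (ne_of_gt hk)).smul (h k)
    rw [inv_smul_smul₀ (ne_of_gt hk)] at h2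
    refine h2.congr' ?_
    filter_upwards [hev] with m hm
    rw [inv_smul_smul₀ (ne_of_gt hm)]
  · intro h k
    by_cases hk : 0 < (x.1 : Fin n → ℝ) k
    · exact (hαk k).smul (h k hk)
    · have h0 : (x.1 : Fin n → ℝ) k = 0 := le_antisymm (not_lt.mp hk) (x.1.2.1 k)
      rw [h0, zero_smul]
      rw [show ((0 : Matrix (Fin n) (Fin n) ℝ) = fun a => fun b => (0:ℝ)) from rfl]
      have hαk0 : Tendsto (fun m => ((αU m).1 : Fin n → ℝ) k) atTop (𝓝 0) := by
        have := hαk k; rwa [h0] at this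
      refine tendsto_pi_nhds.mpr fun a => tendsto_pi_nhds.mpr fun b => ?_
      apply squeeze_zero_norm (a := fun m => ((αU m).1 : Fin n → ℝ) k)
      · intro m
        have hb := colProj_abs_le_one (αU m).2 (Finset.Iic k) a b
        have hnn := (αU m).1.2.1 k
        calc ‖(((αU m).1 : Fin n → ℝ) k • colProj (αU m).2 (Finset.Iic k)) a b‖
            = |((αU m).1 : Fin n → ℝ) k| * |colProj (αU m).2 (Finset.Iic k) a b| := by
              rw [Matrix.smul_apply, smul_eq_mul, Real.norm_eq_abs, abs_mul]
          _ ≤ ((αU m).1 : Fin n → ℝ) k * 1 := by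
              rw [abs_of_nonneg hnn]
              exact mul_le_mul_of_nonneg_left hb hnn
          _ = ((αU m).1 : Fin n → ℝ) k := mul_one _
      · exact hαk0

/-- The map from `O(n)` realizing the flag space inside the projector data. -/
def phiMap {n : ℕ} (c : Fin n → Prop) :
    OG n → ({k : Fin n // c k} → Matrix (Fin n) (Fin n) ℝ) :=
  fun U k => colProj U (Finset.Iic k.1)

lemma phiMap_resp {n : ℕ} (c : Fin n → Prop) :
    ∀ a b : OG n, (QuotientGroup.leftRel (blockSubgroup c)) a b → phiMap c a = phiMap c b := by
  intro a b hab
  have h : a⁻¹ * b ∈ blockSubgroup c := QuotientGroup.leftRel_apply.mp hab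
  funext k
  have hb : b = a * (a⁻¹ * b) := by group
  show colProj a (Finset.Iic k.1) = colProj b (Finset.Iic k.1)
  rw [hb, colProj_mul_mem h a k.2]

def phiBar {n : ℕ} (c : Fin n → Prop) :
    OG n ⧸ blockSubgroup c → ({k : Fin n // c k} → Matrix (Fin n) (Fin n) ℝ) :=
  Quotient.lift (phiMap c) (phiMap_resp c)

lemma phiBar_isClosedEmbedding {n : ℕ} (c : Fin n → Prop) :
    Topology.IsClosedEmbedding (phiBar (n := n) c) := by
  apply Continuous.isClosedEmbedding
  · refine (QuotientGroup.isQuotientMap_mk (blockSubgroup c)).continuous_iff.mpr ?_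
    exact continuous_pi fun k => continuous_colProj (Finset.Iic k.1)
  · intro x y
    induction x using QuotientGroup.induction_on
    induction y using QuotientGroup.induction_on
    rename_i a b
    intro h
    refine (QuotientGroup.eq (s := blockSubgroup c)).mpr ?_
    refine mem_blockSubgroup_of_colProj_eq fun k hk => ?_
    exact congrFun h ⟨k, hk⟩

lemma tendsto_quotMk_iff {n : ℕ} (c : Fin n → Prop) (V : ℕ → OG n) (W : OG n) :
    Tendsto (fun m => (QuotientGroup.mk (V m) : OG n ⧸ blockSubgroup c)) atTop
        (𝓝 (QuotientGroup.mk W)) ↔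
      ∀ k : Fin n, c k → Tendsto (fun m => colProj (V m) (Finset.Iic k)) atTop
        (𝓝 (colProj W (Finset.Iic k))) := by
  rw [(phiBar_isClosedEmbedding c).isInducing.tendsto_nhds_iff]
  have hc : (phiBar c) ∘ (fun m => (QuotientGroup.mk (V m) : OG n ⧸ blockSubgroup c))
      = fun m => phiMap c (V m) := rfl
  have hx : phiBar c (QuotientGroup.mk W) = phiMap c W := rfl
  rw [hc, hx, tendsto_pi_nhds]
  constructor
  · intro h k hk
    exact h ⟨k, hk⟩
  · intro h k
    exact h k.1 k.2
/-- **Topology of weighted flags** (Proposition 1.13 of the paper).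
A sequence `(α^(m), W^(m)) = ⟦(α^(m), U^(m))⟧` converges to `(α, W) = ⟦(α, U)⟧` in the
quotient topology of `WF(n)` iff `α^(m) → α` and, for every `k` with `α_k > 0`, the span
of the first `k` columns of `U^(m)` converges to the span of the first `k` columns of
`U` in the Grassmannian (projectors converge); equivalently, iff `α^(m) → α` and
`p_{J^(m) → I}(W^(m)) → W` in `F_I` with `I = τ(α)` (expressed via the lifts `U^(m)`,
`U`, which makes sense for every `m`). -/
theorem weightedFlag_convergence {n : ℕ} (αU : ℕ → Del n × OG n) (x : Del n × OG n) :
    ((Tendsto (fun m => mkWF (αU m)) atTop (𝓝 (mkWF x))) ↔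
      (Tendsto (fun m => ((αU m).1 : Fin n → ℝ)) atTop (𝓝 (x.1 : Fin n → ℝ)) ∧
        ∀ k : Fin n, 0 < (x.1 : Fin n → ℝ) k →
          Tendsto (fun m => colProj (αU m).2 (Finset.Iic k)) atTop
            (𝓝 (colProj x.2 (Finset.Iic k))))) ∧
    ((Tendsto (fun m => mkWF (αU m)) atTop (𝓝 (mkWF x))) ↔
      (Tendsto (fun m => ((αU m).1 : Fin n → ℝ)) atTop (𝓝 (x.1 : Fin n → ℝ)) ∧
        Tendsto (fun m => (QuotientGroup.mk (αU m).2 : flagOfType x.1)) atTop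
          (𝓝 (QuotientGroup.mk x.2)))) := by
  have h1 : Tendsto (fun m => mkWF (αU m)) atTop (𝓝 (mkWF x)) ↔
      (Tendsto (fun m => ((αU m).1 : Fin n → ℝ)) atTop (𝓝 (x.1 : Fin n → ℝ)) ∧
        ∀ k : Fin n, 0 < (x.1 : Fin n → ℝ) k →
          Tendsto (fun m => colProj (αU m).2 (Finset.Iic k)) atTop
            (𝓝 (colProj x.2 (Finset.Iic k)))) := by
    rw [tendsto_mkWF_iff]
    constructor
    · rintro ⟨ha, hb⟩
      exact ⟨ha, (tendsto_smul_colProj_iff ha).mp hb⟩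
    · rintro ⟨ha, hb⟩
      exact ⟨ha, (tendsto_smul_colProj_iff ha).mpr hb⟩
  refine ⟨h1, h1.trans ?_⟩
  constructor
  · rintro ⟨ha, hb⟩
    exact ⟨ha, (tendsto_quotMk_iff _ _ _).mpr hb⟩
  · rintro ⟨ha, hb⟩
    exact ⟨ha, (tendsto_quotMk_iff _ _ _).mp hb⟩
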